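/- Let φ: ℝ⁴ → ℂ be integrable with |φ(x)|·e^{c√|x|} integrable, let L > 0, and define the periodization δ(x) = Σ_{n ∈ ℤ⁴} φ(x + nL). Then ∫_{[−L/2,L/2]⁴} |δ(x)| · e^{c√(|x|_L)} dx ≤ ∫_{ℝ⁴} |φ(x)| · e^{c√|x|} dx, where |x|_L = (L/π)(Σ_j sin²(π x_j/L))^{1/2}. -/

import Mathlib

open MeasureTheory

/-- The periodic norm `|a|_L = (L/π)·(Σ_j sin²(π a_j/L))^{1/2}` on `ℝ⁴`. -/
noncomputable def normL (L : ℝ) (a : EuclideanSpace ℝ (Fin 4)) : ℝ :=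
  L / Real.pi * Real.sqrt (∑ j, Real.sin (Real.pi * a j / L) ^ 2)

/-!
Since `|·|_L` is `L`-periodic and `|x|_L ≤ |x|`, the weight at `x` is at most the weight at every
translate `x + nL`; so `|δ(x)| e^{c√|x|_L} ≤ Σ_n |φ(x + nL)| e^{c√|x + nL|}`. The half-open cube
`[-L/2, L/2)⁴` is a fundamental domain for `Lℤ⁴` and differs from the closed cube by a null set,
so integrating the right-hand side over the cube unfolds to the integral of `|φ| e^{c√|·|}` over
`ℝ⁴`. The comparison is carried out for lower Lebesgue integrals, which needs no integrability of
the periodization.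
-/

open Set ENNReal

theorem setLIntegral_tsum_comp_add_eq_lintegral {G ι : Type*} [MeasurableSpace G] [AddGroup G]
    [MeasurableAdd G] {μ : Measure G} [μ.IsAddRightInvariant] [Countable ι] {s : Set G}
    (hs : MeasurableSet s) {v : ι → G} (hv : ∀ y, ∃! n, y - v n ∈ s) {f : G → ℝ≥0∞}
    (hf : AEMeasurable f μ) :
    ∫⁻ x in s, ∑' n, f (x + v n) ∂μ = ∫⁻ y, f y ∂μ := by
  set tile : ι → Set G := fun n => (· - v n) ⁻¹' s
  have hmp n : MeasurePreserving (· + v n) μ μ := measurePreserving_add_right μ (v n)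
  have htile n : (· + v n) ⁻¹' tile n = s := by ext; simp [tile]
  have hcover : ⋃ n, tile n = univ := iUnion_eq_univ_iff.2 fun y => (hv y).exists
  have hdisj : Pairwise (Function.onFun Disjoint tile) := fun n m hnm =>
    disjoint_left.2 fun y hn hm => hnm ((hv y).unique hn hm)
  calc ∫⁻ x in s, ∑' n, f (x + v n) ∂μ = ∑' n, ∫⁻ x in s, f (x + v n) ∂μ :=
        lintegral_tsum fun n =>
          (hf.comp_quasiMeasurePreserving (hmp n).quasiMeasurePreserving).restrict
    _ = ∑' n, ∫⁻ y in tile n, f y ∂μ := by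
        refine tsum_congr fun n => ?_
        rw [← htile n]
        exact (hmp n).setLIntegral_comp_preimage_emb
          (MeasurableEquiv.addRight (v n)).measurableEmbedding f _
    _ = ∫⁻ y in ⋃ n, tile n, f y ∂μ :=
        (lintegral_iUnion (fun n => hs.preimage (measurable_sub_const' (v n))) hdisj f).symm
    _ = ∫⁻ y, f y ∂μ := by
        rw [hcover, Measure.restrict_univ]

section Lattice

variable {ι : Type*}

def latticePoint (L : ℝ) (n : ι → ℤ) : EuclideanSpace ℝ ι :=
  WithLp.toLp 2 fun j => (n j : ℝ) * L

def cubeIco (L : ℝ) : Set (EuclideanSpace ℝ ι) :=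
  {x | ∀ j, x j ∈ Ico (-L / 2) (L / 2)}

theorem toLp_add_mul_eq_add_latticePoint (L : ℝ) (x : EuclideanSpace ℝ ι) (n : ι → ℤ) :
    WithLp.toLp 2 (fun j => x j + (n j : ℝ) * L) = x + latticePoint L n :=
  rfl

theorem measurableSet_cubeIco [Fintype ι] (L : ℝ) :
    MeasurableSet (cubeIco L : Set (EuclideanSpace ℝ ι)) := by
  have : cubeIco L = WithLp.ofLp ⁻¹' univ.pi fun _ : ι => Ico (-L / 2) (L / 2) := by
    ext; simp [cubeIco]
  rw [this]
  exact (MeasurableSet.univ_pi fun _ => measurableSet_Ico).preimage (WithLp.measurable_ofLp 2 _)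

theorem cubeIco_ae_eq [Fintype ι] (L : ℝ) :
    (cubeIco L : Set (EuclideanSpace ℝ ι)) =ᵐ[volume] {x | ∀ j, x j ∈ Icc (-L / 2) (L / 2)} := by
  have h : ∀ t : Set ℝ, {x : EuclideanSpace ℝ ι | ∀ j, x j ∈ t} =
      WithLp.ofLp ⁻¹' univ.pi fun _ => t := fun t => by ext; simp
  rw [cubeIco, h, h]
  exact PiLp.volume_preserving_ofLp ι |>.quasiMeasurePreserving.preimage_ae_eq
    Measure.pi_Ico_ae_eq_pi_Icc

theorem existsUnique_sub_latticePoint_mem_cubeIco {L : ℝ} (hL : 0 < L)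
    (y : EuclideanSpace ℝ ι) :
    ∃! n : ι → ℤ, y - latticePoint L n ∈ cubeIco L := by
  have h j : ∃! m : ℤ, y j - m • L ∈ Ico (-L / 2) (L / 2) := by
    simpa only [show -L / 2 + L = L / 2 by ring] using
      existsUnique_sub_zsmul_mem_Ico hL (y j) (-L / 2)
  have hmem (m : ι → ℤ) :
      y - latticePoint L m ∈ cubeIco L ↔ ∀ j, y j - m j • L ∈ Ico (-L / 2) (L / 2) := by
    simp [cubeIco, latticePoint, zsmul_eq_mul]
  choose n hn huniq using h
  exact ⟨n, (hmem n).2 hn, fun m hm => funext fun j => huniq j (m j) ((hmem m).1 hm j)⟩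

end Lattice

theorem normL_add_latticePoint {L : ℝ} (hL : L ≠ 0) (x : EuclideanSpace ℝ (Fin 4))
    (n : Fin 4 → ℤ) :
    normL L (x + latticePoint L n) = normL L x := by
  have hsq (t : ℝ) (m : ℤ) : Real.sin (t + m * Real.pi) ^ 2 = Real.sin t ^ 2 := by
    rw [Real.sin_add_int_mul_pi, ← sq_abs, abs_mul, abs_neg_one_zpow, one_mul, sq_abs]
  simp only [normL]
  congr 2
  refine Finset.sum_congr rfl fun j _ => ?_
  rw [← hsq (Real.pi * x j / L) (n j)]
  congr 2
  simp only [latticePoint, PiLp.add_apply]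
  field_simp

theorem normL_le_norm {L : ℝ} (hL : 0 < L) (y : EuclideanSpace ℝ (Fin 4)) : normL L y ≤ ‖y‖ := by
  have hLπ : 0 < L / Real.pi := div_pos hL Real.pi_pos
  have hcoord j : (L / Real.pi * Real.sin (Real.pi * y j / L)) ^ 2 ≤ y j ^ 2 := by
    calc (L / Real.pi * Real.sin (Real.pi * y j / L)) ^ 2
        ≤ (L / Real.pi * (Real.pi * y j / L)) ^ 2 := by
          rw [mul_pow, mul_pow]
          exact mul_le_mul_of_nonneg_left Real.sin_sq_le_sq (sq_nonneg _)
      _ = y j ^ 2 := by field_simp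
  calc normL L y = Real.sqrt (∑ j, (L / Real.pi * Real.sin (Real.pi * y j / L)) ^ 2) := by
        simp_rw [normL, mul_pow, ← Finset.mul_sum, Real.sqrt_mul (sq_nonneg _),
          Real.sqrt_sq hLπ.le]
    _ ≤ Real.sqrt (∑ j, y j ^ 2) := Real.sqrt_le_sqrt (Finset.sum_le_sum fun j _ => hcoord j)
    _ = ‖y‖ := by simp [EuclideanSpace.norm_eq]

theorem integral_le_integral_of_lintegral_enorm_le {α β : Type*} [MeasurableSpace α]
    [MeasurableSpace β] {μ : Measure α} {ν : Measure β} {f : α → ℝ} {g : β → ℝ}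
    (hg : Integrable g ν) (hg_nonneg : 0 ≤ g) (h : ∫⁻ x, ‖f x‖ₑ ∂μ ≤ ∫⁻ y, ‖g y‖ₑ ∂ν) :
    ∫ x, f x ∂μ ≤ ∫ y, g y ∂ν :=
  calc ∫ x, f x ∂μ ≤ ‖∫ x, f x ∂μ‖ := Real.le_norm_self _
    _ ≤ ∫ y, ‖g y‖ ∂ν := by
        rw [← ENNReal.ofReal_le_ofReal_iff (integral_nonneg fun _ => norm_nonneg _),
          ofReal_norm, ofReal_integral_norm_eq_lintegral_enorm hg]
        exact (enorm_integral_le_lintegral_enorm f).trans h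
    _ = ∫ y, g y ∂ν := by simp_rw [Real.norm_of_nonneg (hg_nonneg _)]

theorem enorm_norm_tsum_mul_exp_le_tsum {c L : ℝ} (hc : 0 ≤ c) (hL : 0 < L)
    (φ : EuclideanSpace ℝ (Fin 4) → ℂ) (x : EuclideanSpace ℝ (Fin 4)) :
    ‖‖∑' n, φ (x + latticePoint L n)‖ * Real.exp (c * √(normL L x))‖ₑ ≤
      ∑' n, ‖‖φ (x + latticePoint L n)‖ * Real.exp (c * √‖x + latticePoint L n‖)‖ₑ := by
  have hweight (n : Fin 4 → ℤ) :
      ‖Real.exp (c * √(normL L x))‖ₑ ≤ ‖Real.exp (c * √‖x + latticePoint L n‖)‖ₑ := by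
    rw [enorm_le_iff_norm_le, Real.norm_of_nonneg (Real.exp_pos _).le,
      Real.norm_of_nonneg (Real.exp_pos _).le, ← normL_add_latticePoint hL.ne' x n]
    gcongr
    exact normL_le_norm hL _
  calc ‖‖∑' n, φ (x + latticePoint L n)‖ * Real.exp (c * √(normL L x))‖ₑ
      = ‖∑' n, φ (x + latticePoint L n)‖ₑ * ‖Real.exp (c * √(normL L x))‖ₑ := by
        rw [enorm_mul, enorm_norm]
    _ ≤ (∑' n, ‖φ (x + latticePoint L n)‖ₑ) * ‖Real.exp (c * √(normL L x))‖ₑ := by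
        gcongr; exact enorm_tsum_le_tsum_enorm
    _ = ∑' n, ‖φ (x + latticePoint L n)‖ₑ * ‖Real.exp (c * √(normL L x))‖ₑ :=
        ENNReal.tsum_mul_right.symm
    _ ≤ ∑' n, ‖φ (x + latticePoint L n)‖ₑ * ‖Real.exp (c * √‖x + latticePoint L n‖)‖ₑ := by
        gcongr with n; exact hweight n
    _ = ∑' n, ‖‖φ (x + latticePoint L n)‖ * Real.exp (c * √‖x + latticePoint L n‖)‖ₑ := by
        simp_rw [enorm_mul, enorm_norm]

theorem periodization_weighted_bound_general (c L : ℝ) (hc : 0 < c) (hL : 0 < L)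
    (φ : EuclideanSpace ℝ (Fin 4) → ℂ)
    (hφw : Integrable (fun x : EuclideanSpace ℝ (Fin 4) =>
      ‖φ x‖ * Real.exp (c * Real.sqrt ‖x‖))) :
    ∫ x in ({x | ∀ j, x j ∈ Set.Icc (-L/2) (L/2)} : Set (EuclideanSpace ℝ (Fin 4))),
        ‖∑' n : Fin 4 → ℤ, φ (WithLp.toLp 2 (fun j => x j + (n j : ℝ) * L))‖ *
          Real.exp (c * Real.sqrt (normL L x))
      ≤ ∫ x : EuclideanSpace ℝ (Fin 4), ‖φ x‖ * Real.exp (c * Real.sqrt ‖x‖) := by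
  refine integral_le_integral_of_lintegral_enorm_le hφw (fun y => by positivity) ?_
  simp only [toLp_add_mul_eq_add_latticePoint]
  rw [← Measure.restrict_congr_set (cubeIco_ae_eq L)]
  calc _ ≤ ∫⁻ x in cubeIco L, ∑' n, ‖‖φ (x + latticePoint L n)‖ *
          Real.exp (c * √‖x + latticePoint L n‖)‖ₑ :=
        lintegral_mono fun x => enorm_norm_tsum_mul_exp_le_tsum hc.le hL φ x
    _ = _ := setLIntegral_tsum_comp_add_eq_lintegral (measurableSet_cubeIco L)
        (existsUnique_sub_latticePoint_mem_cubeIco hL) hφw.aestronglyMeasurable.enorm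

theorem periodization_weighted_bound (c L : ℝ) (hc : 0 < c) (hL : 0 < L)
    (φ : EuclideanSpace ℝ (Fin 4) → ℂ)
    (hφ : Integrable φ)
    (hφw : Integrable (fun x : EuclideanSpace ℝ (Fin 4) =>
      ‖φ x‖ * Real.exp (c * Real.sqrt ‖x‖))) :
    ∫ x in ({x | ∀ j, x j ∈ Set.Icc (-L/2) (L/2)} : Set (EuclideanSpace ℝ (Fin 4))),
        ‖∑' n : Fin 4 → ℤ, φ (WithLp.toLp 2 (fun j => x j + (n j : ℝ) * L))‖ *
          Real.exp (c * Real.sqrt (normL L x))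
      ≤ ∫ x : EuclideanSpace ℝ (Fin 4), ‖φ x‖ * Real.exp (c * Real.sqrt ‖x‖) :=
  periodization_weighted_bound_general c L hc hL φ hφw
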